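/- arXiv:2004.05241 — 2 statements merged into one kernel-verified Lean document; each statement's English description precedes it below -/
import Mathlib

section
/- Given a solution with time cost T, the Time-Informed Set Ω(T) contains all trajectories with time cost less than or equal to T: if ζ:[0,T']→X is any solution trajectory with T' ≤ T, ζ(0)=x_s, ζ(T') ∈ X_g, then ζ(t) ∈ Ω(T) for all t ∈ [0,T']. Consequently, any trajectory not contained in Ω(T) has time cost strictly greater than T. -/
open Set

/-- A trajectory `x` is dynamics-feasible on `[a,b]` for the system `ẋ = f(x,u)` with
admissible control set `U`. -/
def Feasible {n m : ℕ} (f : EuclideanSpace ℝ (Fin n) → (Fin m → ℝ) → EuclideanSpace ℝ (Fin n))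
    (U : Set (Fin m → ℝ)) (a b : ℝ) (x : ℝ → EuclideanSpace ℝ (Fin n)) : Prop :=
  ∃ u : ℝ → (Fin m → ℝ), ∀ t ∈ Set.Icc a b, u t ∈ U ∧ HasDerivAt x (f (x t) (u t)) t

/-- Exact forward reachable set from `xs` over `[t0,t]`. -/
def XfSet {n m : ℕ} (f : EuclideanSpace ℝ (Fin n) → (Fin m → ℝ) → EuclideanSpace ℝ (Fin n))
    (U : Set (Fin m → ℝ)) (xs : EuclideanSpace ℝ (Fin n)) (t0 t : ℝ) :
    Set (EuclideanSpace ℝ (Fin n)) :=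
  {z | ∃ x : ℝ → EuclideanSpace ℝ (Fin n), Feasible f U t0 t x ∧ x t0 = xs ∧ x t = z}

/-- Exact backward reachable set to the goal `Xg` over `[t,tf]`. -/
def XbSet {n m : ℕ} (f : EuclideanSpace ℝ (Fin n) → (Fin m → ℝ) → EuclideanSpace ℝ (Fin n))
    (U : Set (Fin m → ℝ)) (Xg : Set (EuclideanSpace ℝ (Fin n))) (t tf : ℝ) :
    Set (EuclideanSpace ℝ (Fin n)) :=
  {z | ∃ x : ℝ → EuclideanSpace ℝ (Fin n), Feasible f U t tf x ∧ x t = z ∧ x tf ∈ Xg}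

/-- Given a solution with cost `T`, the Time-Informed Set `Ω(T)` contains all solution
trajectories with cost `T' ≤ T`; consequently, any solution trajectory not contained in
`Ω(T)` has time cost strictly greater than `T`. -/
theorem TIS_contains_all_improving_trajectories {n m : ℕ}
    (f : EuclideanSpace ℝ (Fin n) → (Fin m → ℝ) → EuclideanSpace ℝ (Fin n))
    (U : Set (Fin m → ℝ)) (xs : EuclideanSpace ℝ (Fin n)) (Xg : Set (EuclideanSpace ℝ (Fin n)))
    (F B : ℝ → ℝ → Set (EuclideanSpace ℝ (Fin n)))
    (hF : ∀ t0 t : ℝ, XfSet f U xs t0 t ⊆ F t0 t)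
    (hB : ∀ t tf : ℝ, XbSet f U Xg t tf ⊆ B t tf)
    (T : ℝ) (hT : 0 < T) :
    (∀ T' : ℝ, ∀ ζ : ℝ → EuclideanSpace ℝ (Fin n), 0 < T' → T' ≤ T →
        Feasible f U 0 T' ζ → ζ 0 = xs → ζ T' ∈ Xg →
        ∀ t ∈ Icc (0:ℝ) T', ζ t ∈ ⋃ s ∈ Icc (0:ℝ) T, F 0 s ∩ ⋃ τ ∈ Icc s T, B s τ) ∧
      (∀ T' : ℝ, ∀ ζ : ℝ → EuclideanSpace ℝ (Fin n), 0 < T' →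
        Feasible f U 0 T' ζ → ζ 0 = xs → ζ T' ∈ Xg →
        (∃ t ∈ Icc (0:ℝ) T', ζ t ∉ ⋃ s ∈ Icc (0:ℝ) T, F 0 s ∩ ⋃ τ ∈ Icc s T, B s τ) →
        T < T') := by
  have main : ∀ T' : ℝ, ∀ ζ : ℝ → EuclideanSpace ℝ (Fin n), 0 < T' → T' ≤ T →
      Feasible f U 0 T' ζ → ζ 0 = xs → ζ T' ∈ Xg →
      ∀ t ∈ Icc (0:ℝ) T', ζ t ∈ ⋃ s ∈ Icc (0:ℝ) T, F 0 s ∩ ⋃ τ ∈ Icc s T, B s τ := by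
    intro T' ζ hT'pos hT'le hfeas h0 hg t ht
    obtain ⟨ht0, htT'⟩ := ht
    obtain ⟨u, hu⟩ := hfeas
    have hfF : ζ t ∈ F 0 t := by
      apply hF
      exact ⟨ζ, ⟨u, fun s hs => hu s ⟨hs.1, hs.2.trans htT'⟩⟩, h0, rfl⟩
    have hfB : ζ t ∈ B t T' := by
      apply hB
      exact ⟨ζ, ⟨u, fun s hs => hu s ⟨ht0.trans hs.1, hs.2⟩⟩, rfl, hg⟩
    refine mem_iUnion₂.2 ⟨t, ⟨ht0, htT'.trans hT'le⟩, hfF, ?_⟩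
    exact mem_iUnion₂.2 ⟨T', ⟨htT', hT'le⟩, hfB⟩
  refine ⟨main, ?_⟩
  intro T' ζ hT'pos hfeas h0 hg ⟨t, ht, hnot⟩
  by_contra h
  push_neg at h
  exact hnot (main T' ζ hT'pos h hfeas h0 hg t ht)
end

section
/- For single-integrator dynamics, the reverse inclusion also holds: any point x with ‖x − x_s‖₂ + ‖x − x_g‖₂ ≤ u_max·T lies in Ω(T) = ⋃_{0≤t≤T} F[0,t] ∩ R_b[t,T], where F[0,t] is the closed ball of radius u_max·t about x_s and R_b[t,T] = ⋃_{t≤τ≤T} {y : ‖y − x_g‖₂ ≤ u_max(τ−t)}. Hence Ω(T) equals the prolate hyper-spheroid {x : ‖x − x_s‖₂ + ‖x − x_g‖₂ ≤ u_max·T}. -/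
open Set Metric

/-!
The union over `τ ∈ [t, T]` of the balls about `x_g` of radius
`u_max (τ - t)` is just the largest of them, of radius `u_max (T - t)`. So `x ∈ Ω(T)` says that the
time `T` can be split as `t + (T - t)` with `‖x - x_s‖ ≤ u_max t` and `‖x - x_g‖ ≤ u_max (T - t)`,
which is possible exactly when `‖x - x_s‖ + ‖x - x_g‖ ≤ u_max T` (take `t = ‖x - x_s‖ / u_max`).
-/

theorem exists_mem_Icc_le_mul_and_le_mul_sub_iff {a b c T : ℝ} (ha : 0 ≤ a) (hb : 0 ≤ b)
    (hc : 0 < c) :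
    (∃ t ∈ Icc (0 : ℝ) T, a ≤ c * t ∧ b ≤ c * (T - t)) ↔ a + b ≤ c * T := by
  constructor
  · rintro ⟨t, -, hat, hbt⟩
    linarith [mul_sub c T t]
  · intro hab
    have hca : c * (a / c) = a := mul_div_cancel₀ a hc.ne'
    refine ⟨a / c, ⟨div_nonneg ha hc.le, ?_⟩, hca.ge, ?_⟩
    · rw [div_le_iff₀ hc]
      linarith
    · rw [mul_sub, hca]
      linarith

section PseudoMetricSpace

variable {α : Type*} [PseudoMetricSpace α]

theorem biUnion_Icc_closedBall_mul_sub (y : α) {c t T : ℝ} (hc : 0 ≤ c) (htT : t ≤ T) :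
    ⋃ τ ∈ Icc t T, closedBall y (c * (τ - t)) = closedBall y (c * (T - t)) := by
  refine subset_antisymm (iUnion₂_subset fun τ hτ => ?_) ?_
  · exact closedBall_subset_closedBall (by gcongr; exact hτ.2)
  · exact subset_biUnion_of_mem (u := fun τ => closedBall y (c * (τ - t))) ⟨htT, le_rfl⟩

theorem biUnion_closedBall_inter_biUnion_closedBall_eq {xs xg : α} {c T : ℝ} (hc : 0 < c) :
    ⋃ t ∈ Icc (0 : ℝ) T, closedBall xs (c * t) ∩ ⋃ τ ∈ Icc t T, closedBall xg (c * (τ - t)) =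
      {x | dist x xs + dist x xg ≤ c * T} := by
  ext x
  have hsplit := exists_mem_Icc_le_mul_and_le_mul_sub_iff (T := T)
    (dist_nonneg (x := x) (y := xs)) (dist_nonneg (x := x) (y := xg)) hc
  rw [mem_ofPred_eq, ← hsplit, mem_iUnion₂]
  refine exists_congr fun t => ?_
  rw [exists_prop]
  refine and_congr_right fun ht => ?_
  rw [mem_inter_iff, biUnion_Icc_closedBall_mul_sub xg hc.le ht.2, mem_closedBall, mem_closedBall]

end PseudoMetricSpace

theorem singleIntegrator_TIS_eq_L2informed_general {n : ℕ}
    (xs xg : EuclideanSpace ℝ (Fin n)) (umax T : ℝ) (hu : 0 < umax) :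
    ({x | dist x xs + dist x xg ≤ umax * T} ⊆
        ⋃ t ∈ Icc (0:ℝ) T,
          closedBall xs (umax * t) ∩ ⋃ τ ∈ Icc t T, closedBall xg (umax * (τ - t))) ∧
      (⋃ t ∈ Icc (0:ℝ) T,
          closedBall xs (umax * t) ∩ ⋃ τ ∈ Icc t T, closedBall xg (umax * (τ - t))) =
        {x | dist x xs + dist x xg ≤ umax * T} := by
  have hΩ := biUnion_closedBall_inter_biUnion_closedBall_eq (xs := xs) (xg := xg) (T := T) hu
  exact ⟨hΩ.symm.subset, hΩ⟩

/-- For single-integrator dynamics, every point of the `L₂`-Informed Set lies in the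
Time-Informed Set; hence `Ω(T)` equals the prolate hyper-spheroid
`{x : ‖x−x_s‖ + ‖x−x_g‖ ≤ u_max·T}`. -/
theorem singleIntegrator_TIS_eq_L2informed {n : ℕ}
    (xs xg : EuclideanSpace ℝ (Fin n)) (umax T : ℝ) (hu : 0 < umax) (hT : 0 < T)
    (hreach : dist xs xg ≤ umax * T) :
    ({x | dist x xs + dist x xg ≤ umax * T} ⊆
        ⋃ t ∈ Icc (0:ℝ) T,
          closedBall xs (umax * t) ∩ ⋃ τ ∈ Icc t T, closedBall xg (umax * (τ - t))) ∧
      (⋃ t ∈ Icc (0:ℝ) T,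
          closedBall xs (umax * t) ∩ ⋃ τ ∈ Icc t T, closedBall xg (umax * (τ - t))) =
        {x | dist x xs + dist x xg ≤ umax * T} :=
  singleIntegrator_TIS_eq_L2informed_general xs xg umax T hu
end
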